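/- Assume |f| ≤ B and |g| ≤ B pointwise for all f ∈ F and g ∈ G. For probability measures P ≪ Q define the chi-squared divergence χ²(P, Q) := ∫ (dP/dQ)² dQ − 1, and set χ²(P, Q) := +∞ if P is not absolutely continuous with respect to Q. Let χ²_{xy} := χ²(joint law of (x, y) under P_test, joint law of (x, y) under P_train) and χ²_y := χ²(law of y under P_test, law of y under P_train), and assume both are finite. If R_train[f] ≤ 16 B² χ²_{xy} and R_train(f, g) ≤ 16 B² χ²_y, then R_test(f, g) ≤ 24 B √( R_train[f] · χ²_{xy} ) + 24 B √( R_train(f, g) · χ²_y ). -/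

import Mathlib

open MeasureTheory ProbabilityTheory
open scoped ENNReal NNReal Classical

noncomputable section

variable {X Y : Type*} [MeasurableSpace X] [MeasurableSpace Y]

/-- excess risk of the pair (f,g) under the covariate law μ. -/
def risk (μ : Measure (X × Y)) (fstar : X → ℝ) (gstar : Y → ℝ)
    (f : X → ℝ) (g : Y → ℝ) : ℝ :=
  ∫ w, ((f w.1 - fstar w.1) + (g w.2 - gstar w.2)) ^ 2 ∂μ

/-- conditional bias β_f = E_train[(f - f⋆)(x) | y], as a function on X × Y. -/
def bias (μtrain : Measure (X × Y)) (fstar f : X → ℝ) : X × Y → ℝ :=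
  μtrain[(fun w : X × Y => f w.1 - fstar w.1)|MeasurableSpace.comap Prod.snd inferInstance]

/-- per-function risk R_e[f]. -/
def riskF (μ μtrain : Measure (X × Y)) (fstar f : X → ℝ) : ℝ :=
  ∫ w, (f w.1 - fstar w.1 - bias μtrain fstar f w) ^ 2 ∂μ

/-- chi-squared divergence χ²(P, Q) = ∫ (dP/dQ)² dQ − 1, set to ∞ if P is not
absolutely continuous with respect to Q. -/
def chiSq {α : Type*} [MeasurableSpace α] (P Q : Measure α) : ℝ≥0∞ :=
  if P ≪ Q then (∫⁻ x, (P.rnDeriv Q x) ^ 2 ∂Q) - 1 else ⊤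

lemma chiSq_ac {α : Type*} [MeasurableSpace α] {P Q : Measure α} (h : chiSq P Q ≠ ⊤) : P ≪ Q := by
  by_contra hc; simp [chiSq, hc] at h

lemma chiSq_lintegral_ne_top {α : Type*} [MeasurableSpace α] {P Q : Measure α} (hAC : P ≪ Q) (h : chiSq P Q ≠ ⊤) :
    ∫⁻ x, (P.rnDeriv Q x) ^ 2 ∂Q ≠ ⊤ := by
  intro hL
  rw [chiSq, if_pos hAC, hL] at h
  simp [ENNReal.top_sub] at h

lemma sq_integral_transfer {α : Type*} [MeasurableSpace α] {P Q : Measure α} [IsProbabilityMeasure P] [IsProbabilityMeasure Q]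
    (hAC : P ≪ Q) (hχ : chiSq P Q ≠ ⊤) {φ : α → ℝ} (hφ : AEStronglyMeasurable φ Q)
    {M : ℝ} (hM0 : 0 ≤ M) (hM : ∀ᵐ x ∂Q, |φ x| ≤ M) :
    ∫ x, φ x ^ 2 ∂P ≤ ∫ x, φ x ^ 2 ∂Q
      + M * Real.sqrt ((chiSq P Q).toReal * ∫ x, φ x ^ 2 ∂Q) := by
  set ρ : α → ℝ := fun x => (P.rnDeriv Q x).toReal with hρ_def
  set L : ℝ≥0∞ := ∫⁻ x, (P.rnDeriv Q x) ^ 2 ∂Q with hL_def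
  have hLne : L ≠ ⊤ := chiSq_lintegral_ne_top hAC hχ
  have hρmeas : Measurable ρ := (Measure.measurable_rnDeriv P Q).ennreal_toReal
  have hρ_int : Integrable ρ Q := Measure.integrable_toReal_rnDeriv
  have hρsq_int : Integrable (fun x => ρ x ^ 2) Q := by
    have := integrable_toReal_of_lintegral_ne_top
      (((Measure.measurable_rnDeriv P Q).pow_const 2).aemeasurable) hLne
    simpa [ENNReal.toReal_pow] using this
  have hρ2eq : ∫ x, ρ x ^ 2 ∂Q = L.toReal := by
    have h1 : ∫ x, ((P.rnDeriv Q x) ^ 2).toReal ∂Q = L.toReal := by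
      refine integral_toReal (((Measure.measurable_rnDeriv P Q).pow_const 2).aemeasurable) ?_
      filter_upwards [Measure.rnDeriv_lt_top P Q] with x hx
      exact ENNReal.pow_lt_top hx
    simpa [ENNReal.toReal_pow] using h1
  have hρ1 : ∫ x, ρ x ∂Q = 1 := by
    rw [hρ_def]; rw [Measure.integral_toReal_rnDeriv hAC]; simp
  -- square function integrable
  have hφ2 : AEStronglyMeasurable (fun x => φ x ^ 2) Q := by
    exact (hφ.mul hφ).congr (Filter.Eventually.of_forall fun x => by simp [sq])
  have hφsq_bd : ∀ᵐ x ∂Q, ‖φ x ^ 2‖ ≤ M ^ 2 := by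
    filter_upwards [hM] with x hx
    rw [Real.norm_eq_abs, abs_of_nonneg (sq_nonneg _)]
    calc φ x ^ 2 = |φ x| ^ 2 := (sq_abs _).symm
    _ ≤ M ^ 2 := by exact pow_le_pow_left₀ (abs_nonneg _) hx 2
  have hφsq_int : Integrable (fun x => φ x ^ 2) Q :=
    Integrable.mono' (integrable_const (M ^ 2)) hφ2 hφsq_bd
  set S := ∫ x, φ x ^ 2 ∂Q with hS_def
  have hS0 : 0 ≤ S := integral_nonneg fun x => sq_nonneg _
  set d : α → ℝ := fun x => ρ x - 1 with hd_def
  have hd_meas : Measurable d := hρmeas.sub measurable_const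
  have hd_int : Integrable d Q := hρ_int.sub (integrable_const 1)
  have i1 : Integrable (fun x => ρ x ^ 2 - 2 * ρ x) Q := hρsq_int.sub (hρ_int.const_mul 2)
  have hdsq_int : Integrable (fun x => d x ^ 2) Q := by
    have h : (fun x => d x ^ 2) = fun x => (ρ x ^ 2 - 2 * ρ x) + 1 := by
      funext x; simp only [hd_def]; ring
    rw [h]
    exact i1.add (integrable_const 1)
  have hdsq_eq : ∫ x, d x ^ 2 ∂Q = L.toReal - 1 := by
    have h : (fun x => d x ^ 2) = fun x => (ρ x ^ 2 - 2 * ρ x) + 1 := by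
      funext x; simp only [hd_def]; ring
    rw [h, integral_add i1 (integrable_const 1),
      integral_sub hρsq_int (hρ_int.const_mul 2), integral_const_mul, hρ2eq, hρ1]
    simp
    ring
  have hpq : Real.HolderConjugate 2 2 := Real.HolderConjugate.two_two
  have hofReal2 : ENNReal.ofReal (2:ℝ) = 2 := by norm_num
  -- 1 ≤ L.toReal via Cauchy-Schwarz with g = 1
  have hmemρ : MemLp ρ 2 Q := (memLp_two_iff_integrable_sq hρmeas.aestronglyMeasurable).mpr hρsq_int
  have hL1R : 1 ≤ L.toReal := by
    have hcs := integral_mul_le_Lp_mul_Lq_of_nonneg hpq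
      (Filter.Eventually.of_forall (fun x => ENNReal.toReal_nonneg : ∀ x, 0 ≤ ρ x))
      (Filter.Eventually.of_forall (fun x => zero_le_one : ∀ _x : α, (0:ℝ) ≤ 1))
      (by rw [hofReal2]; exact hmemρ) (by rw [hofReal2]; exact memLp_const 1)
    simp only [mul_one] at hcs
    rw [hρ1] at hcs
    have h2 : (fun a => ρ a ^ (2:ℝ)) = (fun a => ρ a ^ 2) := by
      funext a; rw [show (2:ℝ) = ((2:ℕ):ℝ) by norm_num, Real.rpow_natCast]
    rw [h2] at hcs
    have h3 : ∫ _x : α, (1:ℝ) ^ (2:ℝ) ∂Q = 1 := by simp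
    rw [hρ2eq, h3, Real.one_rpow, mul_one, ← Real.sqrt_eq_rpow] at hcs
    have h0L : (0:ℝ) ≤ L.toReal := ENNReal.toReal_nonneg
    nlinarith [Real.sq_sqrt h0L, Real.sqrt_nonneg L.toReal]
  have hL1 : (1:ℝ≥0∞) ≤ L := by
    by_contra hcon
    push_neg at hcon
    have := (ENNReal.toReal_lt_toReal hLne ENNReal.one_ne_top).mpr hcon
    simp at this
    linarith
  have hχeq : (chiSq P Q).toReal = L.toReal - 1 := by
    rw [chiSq, if_pos hAC, ← hL_def, ENNReal.toReal_sub_of_le hL1 hLne]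
    simp
  have hχ0 : 0 ≤ (chiSq P Q).toReal := ENNReal.toReal_nonneg
  have hdsq_eq' : ∫ x, d x ^ 2 ∂Q = (chiSq P Q).toReal := by rw [hdsq_eq, hχeq]
  have hd2mem : MemLp d 2 Q :=
    (memLp_two_iff_integrable_sq hd_meas.aestronglyMeasurable).mpr hdsq_int
  have hu2mem : MemLp (fun x => |d x|) 2 Q := hd2mem.abs
  have hv2mem : MemLp (fun x => φ x ^ 2) 2 Q := MemLp.of_bound hφ2 (M ^ 2) hφsq_bd
  have hcs2 := integral_mul_le_Lp_mul_Lq_of_nonneg hpq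
      (Filter.Eventually.of_forall (fun x => abs_nonneg (d x)))
      (Filter.Eventually.of_forall (fun x => sq_nonneg (φ x)))
      (by rw [hofReal2]; exact hu2mem) (by rw [hofReal2]; exact hv2mem)
  have hr1 : (fun a => |d a| ^ (2:ℝ)) = fun a => d a ^ 2 := by
    funext a; rw [show (2:ℝ) = ((2:ℕ):ℝ) by norm_num, Real.rpow_natCast, sq_abs]
  have hr2 : (fun a => (φ a ^ 2) ^ (2:ℝ)) = fun a => (φ a ^ 2) ^ 2 := by
    funext a; rw [show (2:ℝ) = ((2:ℕ):ℝ) by norm_num, Real.rpow_natCast]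
  rw [hr1, hr2] at hcs2
  rw [show (∫ a, d a ^ 2 ∂Q) = (chiSq P Q).toReal from hdsq_eq'] at hcs2
  have hv4_int : Integrable (fun x => (φ x ^ 2) ^ 2) Q :=
    (memLp_two_iff_integrable_sq hφ2).mp hv2mem
  have hv4_le : ∫ x, (φ x ^ 2) ^ 2 ∂Q ≤ M ^ 2 * S := by
    rw [hS_def, ← integral_const_mul]
    refine integral_mono_ae hv4_int (hφsq_int.const_mul (M ^ 2)) ?_
    filter_upwards [hM] with x hx
    have h1 : φ x ^ 2 ≤ M ^ 2 := by
      calc φ x ^ 2 = |φ x| ^ 2 := (sq_abs _).symm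
      _ ≤ M ^ 2 := pow_le_pow_left₀ (abs_nonneg _) hx 2
    calc (φ x ^ 2) ^ 2 = (φ x ^ 2) * (φ x ^ 2) := sq _
    _ ≤ M ^ 2 * (φ x ^ 2) := mul_le_mul_of_nonneg_right h1 (sq_nonneg _)
  have hrhs : (chiSq P Q).toReal ^ (1/(2:ℝ)) * (∫ x, (φ x ^ 2) ^ 2 ∂Q) ^ (1/(2:ℝ))
      ≤ Real.sqrt ((chiSq P Q).toReal) * (M * Real.sqrt S) := by
    rw [← Real.sqrt_eq_rpow, ← Real.sqrt_eq_rpow]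
    refine mul_le_mul_of_nonneg_left ?_ (Real.sqrt_nonneg _)
    calc Real.sqrt (∫ x, (φ x ^ 2) ^ 2 ∂Q) ≤ Real.sqrt (M ^ 2 * S) :=
      Real.sqrt_le_sqrt hv4_le
    _ = M * Real.sqrt S := by rw [Real.sqrt_mul (sq_nonneg M), Real.sqrt_sq hM0]
  have hchg : ∫ x, φ x ^ 2 ∂P = ∫ x, ρ x * φ x ^ 2 ∂Q := by
    rw [← integral_rnDeriv_smul hAC (f := fun x => φ x ^ 2)]
    simp only [smul_eq_mul]
    rfl
  have hbd_int : Integrable (fun x => M ^ 2 * |d x|) Q := (hd_int.abs).const_mul _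
  have hdφ_meas : AEStronglyMeasurable (fun x => d x * φ x ^ 2) Q :=
    hd_meas.aestronglyMeasurable.mul hφ2
  have hbound : ∀ᵐ x ∂Q, |d x| * φ x ^ 2 ≤ M ^ 2 * |d x| := by
    filter_upwards [hM] with x hx
    calc |d x| * φ x ^ 2 ≤ |d x| * M ^ 2 := by
          refine mul_le_mul_of_nonneg_left ?_ (abs_nonneg _)
          calc φ x ^ 2 = |φ x| ^ 2 := (sq_abs _).symm
          _ ≤ M ^ 2 := pow_le_pow_left₀ (abs_nonneg _) hx 2
    _ = M ^ 2 * |d x| := mul_comm _ _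
  have hdφ_int : Integrable (fun x => d x * φ x ^ 2) Q := by
    refine Integrable.mono' hbd_int hdφ_meas ?_
    filter_upwards [hbound] with x hx
    rw [Real.norm_eq_abs, abs_mul, abs_of_nonneg (sq_nonneg (φ x))]
    exact hx
  have huv_int : Integrable (fun x => |d x| * φ x ^ 2) Q := by
    refine Integrable.mono' hbd_int ((hd_meas.abs).aestronglyMeasurable.mul hφ2) ?_
    filter_upwards [hbound] with x hx
    rw [Real.norm_eq_abs, abs_mul, abs_abs, abs_of_nonneg (sq_nonneg (φ x))]
    exact hx
  have hle1 : ∫ x, d x * φ x ^ 2 ∂Q ≤ ∫ x, |d x| * φ x ^ 2 ∂Q :=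
    integral_mono_ae hdφ_int huv_int (Filter.Eventually.of_forall fun x =>
      mul_le_mul_of_nonneg_right (le_abs_self _) (sq_nonneg _))
  have hsplit : ∫ x, ρ x * φ x ^ 2 ∂Q = ∫ x, d x * φ x ^ 2 ∂Q + S := by
    rw [hS_def, ← integral_add hdφ_int hφsq_int]
    refine integral_congr_ae (Filter.Eventually.of_forall fun x => ?_)
    simp only [hd_def]; ring
  calc ∫ x, φ x ^ 2 ∂P = ∫ x, d x * φ x ^ 2 ∂Q + S := by rw [hchg, hsplit]
  _ ≤ ∫ x, |d x| * φ x ^ 2 ∂Q + S := by linarith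
  _ ≤ Real.sqrt ((chiSq P Q).toReal) * (M * Real.sqrt S) + S := by
      have := le_trans hcs2 hrhs; linarith
  _ = S + M * Real.sqrt ((chiSq P Q).toReal * S) := by
      rw [Real.sqrt_mul hχ0]; ring

lemma integrable_of_abs_le' {α : Type*} [MeasurableSpace α] {μ : Measure α} [IsFiniteMeasure μ]
    {ψ : α → ℝ} {C : ℝ} (hψ : AEStronglyMeasurable ψ μ) (hb : ∀ᵐ x ∂μ, |ψ x| ≤ C) :
    Integrable ψ μ := by
  refine Integrable.mono' (integrable_const C) hψ ?_
  filter_upwards [hb] with x hx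
  rwa [Real.norm_eq_abs]

def mSnd (X Y : Type*) [MeasurableSpace Y] : MeasurableSpace (X × Y) :=
  MeasurableSpace.comap Prod.snd inferInstance

lemma measurable_factor_snd {X Y : Type*} [MeasurableSpace X] [MeasurableSpace Y] [Nonempty X]
    {φ : X × Y → ℝ}
    (hφ : Measurable[MeasurableSpace.comap (Prod.snd : X × Y → Y) inferInstance] φ) :
    ∃ ψ : Y → ℝ, Measurable ψ ∧ ∀ w : X × Y, φ w = ψ w.2 := by
  obtain ⟨x₀⟩ := (inferInstance : Nonempty X)
  refine ⟨fun y => φ (x₀, y), ?_, ?_⟩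
  · have hi : @Measurable Y (X × Y) _
        (MeasurableSpace.comap (Prod.snd : X × Y → Y) inferInstance)
        (fun y : Y => (x₀, y)) := by
      intro s hs
      obtain ⟨s', hs', rfl⟩ := hs
      have : (fun y : Y => ((x₀, y) : X × Y)) ⁻¹' (Prod.snd ⁻¹' s') = s' := by
        ext y; simp
      rwa [this]
    exact hφ.comp hi
  · rintro ⟨x, y⟩
    obtain ⟨s', _hs', hpre⟩ := hφ (measurableSet_singleton (φ (x₀, y)))
    have h₀ : ((x₀, y) : X × Y) ∈ Prod.snd ⁻¹' s' := by
      rw [hpre]; exact rfl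
    have h₁ : ((x, y) : X × Y) ∈ φ ⁻¹' {φ (x₀, y)} := by
      rw [← hpre]; exact h₀
    simpa using h₁

/-- transfer bound via chi-squared divergences. -/
theorem excess_risk_chi_squared
    (μtrain μtest : Measure (X × Y))
    [IsProbabilityMeasure μtrain] [IsProbabilityMeasure μtest]
    (F : Set (X → ℝ)) (G : Set (Y → ℝ)) (B : ℝ)
    (hFmeas : ∀ f ∈ F, Measurable f) (hGmeas : ∀ g ∈ G, Measurable g)
    (hFbd : ∀ f ∈ F, ∀ x, |f x| ≤ B) (hGbd : ∀ g ∈ G, ∀ y, |g y| ≤ B)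
    (fstar : X → ℝ) (gstar : Y → ℝ) (hfstar : fstar ∈ F) (hgstar : gstar ∈ G)
    (hχxy : chiSq μtest μtrain ≠ ⊤)
    (hχy : chiSq (μtest.map Prod.snd) (μtrain.map Prod.snd) ≠ ⊤)
    (f : X → ℝ) (g : Y → ℝ) (hf : f ∈ F) (hg : g ∈ G)
    (hsmall₁ : riskF μtrain μtrain fstar f
      ≤ 16 * B ^ 2 * (chiSq μtest μtrain).toReal)
    (hsmall₂ : risk μtrain fstar gstar f g
      ≤ 16 * B ^ 2 * (chiSq (μtest.map Prod.snd) (μtrain.map Prod.snd)).toReal) :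
    risk μtest fstar gstar f g
      ≤ 24 * B * Real.sqrt (riskF μtrain μtrain fstar f * (chiSq μtest μtrain).toReal)
        + 24 * B * Real.sqrt (risk μtrain fstar gstar f g *
            (chiSq (μtest.map Prod.snd) (μtrain.map Prod.snd)).toReal) := by
  classical
  -- nonemptiness and sign of B
  have hne : Nonempty (X × Y) := by
    by_contra hcon
    have h1 : μtrain Set.univ = 1 := measure_univ
    rw [Set.univ_eq_empty_iff.mpr (not_nonempty_iff.mp hcon)] at h1
    simp at h1
  haveI : Nonempty X := ⟨hne.some.1⟩
  have hB0 : 0 ≤ B := le_trans (abs_nonneg _) (hFbd fstar hfstar hne.some.1)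
  have habs : ∀ u v : ℝ, |u - v| ≤ |u| + |v| := fun u v => by
    rw [sub_eq_add_neg]; simpa [abs_neg] using abs_add_le u (-v)
  -- absolute continuity
  have hAC : μtest ≪ μtrain := chiSq_ac hχxy
  have hACy : μtest.map Prod.snd ≪ μtrain.map Prod.snd := chiSq_ac hχy
  haveI : IsProbabilityMeasure (μtrain.map (Prod.snd : X × Y → Y)) :=
    Measure.isProbabilityMeasure_map measurable_snd.aemeasurable
  haveI : IsProbabilityMeasure (μtest.map (Prod.snd : X × Y → Y)) :=
    Measure.isProbabilityMeasure_map measurable_snd.aemeasurable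
  have hm : mSnd X Y ≤ (inferInstance : MeasurableSpace (X × Y)) := measurable_snd.comap_le
  haveI : SigmaFinite (μtrain.trim hm) := inferInstance
  set h : X × Y → ℝ := fun w => f w.1 - fstar w.1 with hh_def
  have hh_meas : Measurable h :=
    ((hFmeas f hf).comp measurable_fst).sub ((hFmeas fstar hfstar).comp measurable_fst)
  have hh_bd : ∀ w, |h w| ≤ 2 * B := fun w => by
    calc |h w| ≤ |f w.1| + |fstar w.1| := habs _ _
    _ ≤ B + B := add_le_add (hFbd f hf _) (hFbd fstar hfstar _)
    _ = 2 * B := by ring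
  have hh_int : Integrable h μtrain :=
    integrable_of_abs_le' hh_meas.aestronglyMeasurable (Filter.Eventually.of_forall hh_bd)
  set β : X × Y → ℝ := μtrain[h|mSnd X Y] with hβ_def
  have hβ_sm : StronglyMeasurable[mSnd X Y] β := stronglyMeasurable_condExp
  have hβ_meas : Measurable β := (hβ_sm.mono hm).measurable
  have hβ_int : Integrable β μtrain := integrable_condExp
  have hβ_bd : ∀ᵐ w ∂μtrain, |β w| ≤ 2 * B := by
    have hub : β ≤ᵐ[μtrain] fun _ => 2 * B := by
      have h1 := condExp_mono (m := mSnd X Y) (μ := μtrain) hh_int (integrable_const (2 * B))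
        (Filter.Eventually.of_forall fun w => le_trans (le_abs_self _) (hh_bd w))
      rwa [condExp_const hm] at h1
    have hlb : (fun _ : X × Y => -(2 * B)) ≤ᵐ[μtrain] β := by
      have h1 := condExp_mono (m := mSnd X Y) (μ := μtrain) (integrable_const (-(2 * B))) hh_int
        (Filter.Eventually.of_forall fun w => neg_le_of_abs_le (hh_bd w))
      rwa [condExp_const hm] at h1
    filter_upwards [hub, hlb] with w h1 h2
    exact abs_le.mpr ⟨h2, h1⟩
  set a : X × Y → ℝ := fun w => h w - β w with ha_def
  set bg : X × Y → ℝ := fun w => (g w.2 - gstar w.2) + β w with hbg_def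
  have hgy_meas : Measurable fun w : X × Y => g w.2 - gstar w.2 :=
    ((hGmeas g hg).comp measurable_snd).sub ((hGmeas gstar hgstar).comp measurable_snd)
  have hgy_bd : ∀ w : X × Y, |g w.2 - gstar w.2| ≤ 2 * B := fun w => by
    calc |g w.2 - gstar w.2| ≤ |g w.2| + |gstar w.2| := habs _ _
    _ ≤ B + B := add_le_add (hGbd g hg _) (hGbd gstar hgstar _)
    _ = 2 * B := by ring
  have ha_meas : Measurable a := hh_meas.sub hβ_meas
  have hbg_meas : Measurable bg := hgy_meas.add hβ_meas
  have hbg_mm : Measurable[mSnd X Y] bg := by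
    have h1 : Measurable[mSnd X Y] (Prod.snd : X × Y → Y) := comap_measurable _
    exact (((hGmeas g hg).comp h1).sub ((hGmeas gstar hgstar).comp h1)).add hβ_sm.measurable
  have hbg_sm : StronglyMeasurable[mSnd X Y] bg := hbg_mm.stronglyMeasurable
  have ha_bd : ∀ᵐ w ∂μtrain, |a w| ≤ 4 * B := by
    filter_upwards [hβ_bd] with w hw
    calc |a w| ≤ |h w| + |β w| := habs _ _
    _ ≤ 2 * B + 2 * B := add_le_add (hh_bd w) hw
    _ = 4 * B := by ring
  have hbg_bd : ∀ᵐ w ∂μtrain, |bg w| ≤ 4 * B := by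
    filter_upwards [hβ_bd] with w hw
    calc |bg w| ≤ |g w.2 - gstar w.2| + |β w| := abs_add_le _ _
    _ ≤ 2 * B + 2 * B := add_le_add (hgy_bd w) hw
    _ = 4 * B := by ring
  -- integrability of products and squares under μtrain
  have hab_int : Integrable (bg * h) μtrain := by
    refine integrable_of_abs_le' (C := 8 * B ^ 2)
      (hbg_meas.aestronglyMeasurable.mul hh_meas.aestronglyMeasurable) ?_
    filter_upwards [hbg_bd] with w hw
    calc |(bg * h) w| = |bg w| * |h w| := abs_mul _ _
    _ ≤ (4 * B) * (2 * B) := by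
        exact mul_le_mul hw (hh_bd w) (abs_nonneg _) (by positivity)
    _ = 8 * B ^ 2 := by ring
  have hbβ_int : Integrable (fun w => bg w * β w) μtrain := by
    refine integrable_of_abs_le' (C := 8 * B ^ 2)
      (hbg_meas.aestronglyMeasurable.mul hβ_meas.aestronglyMeasurable) ?_
    filter_upwards [hbg_bd, hβ_bd] with w hw hw2
    calc |bg w * β w| = |bg w| * |β w| := abs_mul _ _
    _ ≤ (4 * B) * (2 * B) := mul_le_mul hw hw2 (abs_nonneg _) (by positivity)
    _ = 8 * B ^ 2 := by ring
  -- orthogonality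
  have hpull : μtrain[bg * h|mSnd X Y] =ᵐ[μtrain] bg * μtrain[h|mSnd X Y] :=
    condExp_mul_of_stronglyMeasurable_left hbg_sm hab_int hh_int
  have horth : ∫ w, a w * bg w ∂μtrain = 0 := by
    have h1 : ∫ w, (bg * h) w ∂μtrain = ∫ w, bg w * β w ∂μtrain := by
      calc ∫ w, (bg * h) w ∂μtrain = ∫ w, (μtrain[bg * h|mSnd X Y]) w ∂μtrain :=
        (integral_condExp hm).symm
      _ = ∫ w, (bg * μtrain[h|mSnd X Y]) w ∂μtrain := integral_congr_ae hpull
      _ = ∫ w, bg w * β w ∂μtrain := rfl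
    have h2 : ∫ w, a w * bg w ∂μtrain
        = ∫ w, ((bg * h) w - bg w * β w) ∂μtrain := by
      refine integral_congr_ae (Filter.Eventually.of_forall fun w => ?_)
      simp only [ha_def, Pi.mul_apply]
      ring
    rw [h2, integral_sub hab_int hbβ_int, h1, sub_self]
  -- integrability of squares
  have ha2_int : Integrable (fun w => a w ^ 2) μtrain := by
    refine integrable_of_abs_le' (C := 16 * B ^ 2)
      ((ha_meas.pow_const 2).aestronglyMeasurable) ?_
    filter_upwards [ha_bd] with w hw
    rw [abs_of_nonneg (sq_nonneg _)]
    calc a w ^ 2 = |a w| ^ 2 := (sq_abs _).symm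
    _ ≤ (4 * B) ^ 2 := pow_le_pow_left₀ (abs_nonneg _) hw 2
    _ = 16 * B ^ 2 := by ring
  have hbg2_int : Integrable (fun w => bg w ^ 2) μtrain := by
    refine integrable_of_abs_le' (C := 16 * B ^ 2)
      ((hbg_meas.pow_const 2).aestronglyMeasurable) ?_
    filter_upwards [hbg_bd] with w hw
    rw [abs_of_nonneg (sq_nonneg _)]
    calc bg w ^ 2 = |bg w| ^ 2 := (sq_abs _).symm
    _ ≤ (4 * B) ^ 2 := pow_le_pow_left₀ (abs_nonneg _) hw 2
    _ = 16 * B ^ 2 := by ring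
  have habg_int : Integrable (fun w => 2 * (a w * bg w)) μtrain := by
    refine Integrable.const_mul ?_ 2
    refine integrable_of_abs_le' (C := 16 * B ^ 2)
      (ha_meas.aestronglyMeasurable.mul hbg_meas.aestronglyMeasurable) ?_
    filter_upwards [ha_bd, hbg_bd] with w h1 h2
    calc |a w * bg w| = |a w| * |bg w| := abs_mul _ _
    _ ≤ (4 * B) * (4 * B) := mul_le_mul h1 h2 (abs_nonneg _) (by positivity)
    _ = 16 * B ^ 2 := by ring
  -- risk decomposition under μtrain
  have hAeq : riskF μtrain μtrain fstar f = ∫ w, a w ^ 2 ∂μtrain := rfl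
  have hRtr : risk μtrain fstar gstar f g = ∫ w, (a w + bg w) ^ 2 ∂μtrain := by
    refine integral_congr_ae (Filter.Eventually.of_forall fun w => ?_)
    simp only [ha_def, hbg_def, hh_def]
    ring
  have hsum : risk μtrain fstar gstar f g
      = (∫ w, a w ^ 2 ∂μtrain) + ∫ w, bg w ^ 2 ∂μtrain := by
    rw [hRtr]
    have e : ∫ w, (a w + bg w) ^ 2 ∂μtrain
        = ∫ w, (a w ^ 2 + (2 * (a w * bg w) + bg w ^ 2)) ∂μtrain := by
      refine integral_congr_ae (Filter.Eventually.of_forall fun w => ?_)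
      ring
    have hmid : Integrable (fun w => 2 * (a w * bg w) + bg w ^ 2) μtrain :=
      habg_int.add hbg2_int
    rw [e, integral_add ha2_int hmid,
      integral_add habg_int hbg2_int, integral_const_mul, horth]
    ring
  -- abbreviations
  set A := ∫ w, a w ^ 2 ∂μtrain with hA_def
  set Bb := ∫ w, bg w ^ 2 ∂μtrain with hBb_def
  set Rtr := risk μtrain fstar gstar f g with hRtr_def
  set χ1 := (chiSq μtest μtrain).toReal with hχ1_def
  set χ2 := (chiSq (μtest.map Prod.snd) (μtrain.map Prod.snd)).toReal with hχ2_def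
  have hA0 : 0 ≤ A := integral_nonneg fun w => sq_nonneg _
  have hBb0 : 0 ≤ Bb := integral_nonneg fun w => sq_nonneg _
  have hχ10 : 0 ≤ χ1 := ENNReal.toReal_nonneg
  have hχ20 : 0 ≤ χ2 := ENNReal.toReal_nonneg
  have hBbRtr : Bb ≤ Rtr := by rw [hsum]; linarith
  have hRtr0 : 0 ≤ Rtr := le_trans hBb0 hBbRtr
  have hsmallA : A ≤ 16 * B ^ 2 * χ1 := by rw [← hAeq]; exact hsmall₁
  have hsmallR : Rtr ≤ 16 * B ^ 2 * χ2 := hsmall₂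
  -- test-side bounds
  have ha_bd_test : ∀ᵐ w ∂μtest, |a w| ≤ 4 * B := hAC.ae_le ha_bd
  have hbg_bd_test : ∀ᵐ w ∂μtest, |bg w| ≤ 4 * B := hAC.ae_le hbg_bd
  have ha2_int_test : Integrable (fun w => a w ^ 2) μtest := by
    refine integrable_of_abs_le' (C := 16 * B ^ 2)
      ((ha_meas.pow_const 2).aestronglyMeasurable) ?_
    filter_upwards [ha_bd_test] with w hw
    rw [abs_of_nonneg (sq_nonneg _)]
    calc a w ^ 2 = |a w| ^ 2 := (sq_abs _).symm
    _ ≤ (4 * B) ^ 2 := pow_le_pow_left₀ (abs_nonneg _) hw 2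
    _ = 16 * B ^ 2 := by ring
  have hbg2_int_test : Integrable (fun w => bg w ^ 2) μtest := by
    refine integrable_of_abs_le' (C := 16 * B ^ 2)
      ((hbg_meas.pow_const 2).aestronglyMeasurable) ?_
    filter_upwards [hbg_bd_test] with w hw
    rw [abs_of_nonneg (sq_nonneg _)]
    calc bg w ^ 2 = |bg w| ^ 2 := (sq_abs _).symm
    _ ≤ (4 * B) ^ 2 := pow_le_pow_left₀ (abs_nonneg _) hw 2
    _ = 16 * B ^ 2 := by ring
  have hRte : risk μtest fstar gstar f g = ∫ w, (a w + bg w) ^ 2 ∂μtest := by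
    refine integral_congr_ae (Filter.Eventually.of_forall fun w => ?_)
    simp only [ha_def, hbg_def, hh_def]
    ring
  have htest_split : risk μtest fstar gstar f g
      ≤ 2 * (∫ w, a w ^ 2 ∂μtest) + 2 * (∫ w, bg w ^ 2 ∂μtest) := by
    rw [hRte, ← integral_const_mul, ← integral_const_mul]
    have hsum_int : Integrable (fun w => 2 * a w ^ 2 + 2 * bg w ^ 2) μtest :=
      (ha2_int_test.const_mul 2).add (hbg2_int_test.const_mul 2)
    have h2 : ∫ w, (a w + bg w) ^ 2 ∂μtest
        ≤ ∫ w, (2 * a w ^ 2 + 2 * bg w ^ 2) ∂μtest := by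
      refine integral_mono_ae ?_ hsum_int
        (Filter.Eventually.of_forall fun w => show (a w + bg w) ^ 2 ≤ 2 * a w ^ 2 + 2 * bg w ^ 2 by nlinarith [sq_nonneg (a w - bg w)])
      refine integrable_of_abs_le' (C := 64 * B ^ 2)
        (((ha_meas.add hbg_meas).pow_const 2).aestronglyMeasurable) ?_
      filter_upwards [ha_bd_test, hbg_bd_test] with w h1 h2
      rw [abs_of_nonneg (sq_nonneg _)]
      calc (a w + bg w) ^ 2 = |a w + bg w| ^ 2 := (sq_abs _).symm
      _ ≤ (8 * B) ^ 2 := by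
          refine pow_le_pow_left₀ (abs_nonneg _) ?_ 2
          calc |a w + bg w| ≤ |a w| + |bg w| := abs_add_le _ _
          _ ≤ 4 * B + 4 * B := add_le_add h1 h2
          _ = 8 * B := by ring
      _ = 64 * B ^ 2 := by ring
    calc ∫ w, (a w + bg w) ^ 2 ∂μtest ≤ ∫ w, (2 * a w ^ 2 + 2 * bg w ^ 2) ∂μtest := h2
    _ = (∫ w, 2 * a w ^ 2 ∂μtest) + ∫ w, 2 * bg w ^ 2 ∂μtest :=
      integral_add (ha2_int_test.const_mul 2) (hbg2_int_test.const_mul 2)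
  -- transfer for a (joint chi-squared)
  have h4B0 : (0:ℝ) ≤ 4 * B := by positivity
  have hta := sq_integral_transfer hAC hχxy ha_meas.aestronglyMeasurable h4B0 ha_bd
  -- factorization of bg through snd and transfer for the marginal
  obtain ⟨ψ, hψ_meas, hψ_eq⟩ := measurable_factor_snd hbg_mm
  have hmap : ∀ e : Measure (X × Y),
      ∫ w, bg w ^ 2 ∂e = ∫ y, ψ y ^ 2 ∂(e.map Prod.snd) := fun e => by
    rw [integral_map measurable_snd.aemeasurable
      ((hψ_meas.pow_const 2).aestronglyMeasurable)]
    refine integral_congr_ae (Filter.Eventually.of_forall fun w => ?_)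
    show bg w ^ 2 = ψ w.2 ^ 2
    rw [hψ_eq w]
  have hψ_bd : ∀ᵐ y ∂(μtrain.map Prod.snd), |ψ y| ≤ 4 * B := by
    rw [ae_map_iff measurable_snd.aemeasurable
      (measurableSet_le hψ_meas.abs measurable_const)]
    filter_upwards [hbg_bd] with w hw
    rw [← hψ_eq w]
    exact hw
  have htb := sq_integral_transfer hACy hχy hψ_meas.aestronglyMeasurable h4B0 hψ_bd
  rw [← hmap μtrain, ← hBb_def] at htb
  rw [hmap μtest] at htest_split
  -- final arithmetic
  rw [hAeq]
  have k1 : A ≤ 4 * B * Real.sqrt (A * χ1) := by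
    have h1 : Real.sqrt A ≤ Real.sqrt (16 * B ^ 2 * χ1) := Real.sqrt_le_sqrt hsmallA
    have h2 : Real.sqrt (16 * B ^ 2 * χ1) = 4 * B * Real.sqrt χ1 := by
      rw [show 16 * B ^ 2 * χ1 = (4 * B) ^ 2 * χ1 by ring, Real.sqrt_mul (sq_nonneg _),
        Real.sqrt_sq h4B0]
    calc A = Real.sqrt A * Real.sqrt A := (Real.mul_self_sqrt hA0).symm
    _ ≤ (4 * B * Real.sqrt χ1) * Real.sqrt A :=
      mul_le_mul_of_nonneg_right (h2 ▸ h1) (Real.sqrt_nonneg _)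
    _ = 4 * B * (Real.sqrt A * Real.sqrt χ1) := by ring
    _ = 4 * B * Real.sqrt (A * χ1) := by rw [← Real.sqrt_mul hA0]
  have k2 : Rtr ≤ 4 * B * Real.sqrt (Rtr * χ2) := by
    have h1 : Real.sqrt Rtr ≤ Real.sqrt (16 * B ^ 2 * χ2) := Real.sqrt_le_sqrt hsmallR
    have h2 : Real.sqrt (16 * B ^ 2 * χ2) = 4 * B * Real.sqrt χ2 := by
      rw [show 16 * B ^ 2 * χ2 = (4 * B) ^ 2 * χ2 by ring, Real.sqrt_mul (sq_nonneg _),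
        Real.sqrt_sq h4B0]
    calc Rtr = Real.sqrt Rtr * Real.sqrt Rtr := (Real.mul_self_sqrt hRtr0).symm
    _ ≤ (4 * B * Real.sqrt χ2) * Real.sqrt Rtr :=
      mul_le_mul_of_nonneg_right (h2 ▸ h1) (Real.sqrt_nonneg _)
    _ = 4 * B * (Real.sqrt Rtr * Real.sqrt χ2) := by ring
    _ = 4 * B * Real.sqrt (Rtr * χ2) := by rw [← Real.sqrt_mul hRtr0]
  have c1 : Real.sqrt (χ1 * A) = Real.sqrt (A * χ1) := by rw [mul_comm]
  have c2 : 8 * B * Real.sqrt (χ2 * Bb) ≤ 8 * B * Real.sqrt (Rtr * χ2) := by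
    refine mul_le_mul_of_nonneg_left ?_ (by positivity)
    rw [show Rtr * χ2 = χ2 * Rtr by ring]
    exact Real.sqrt_le_sqrt (mul_le_mul_of_nonneg_left hBbRtr hχ20)
  have hp1 : 0 ≤ B * Real.sqrt (A * χ1) := by positivity
  have hp2 : 0 ≤ B * Real.sqrt (Rtr * χ2) := by positivity
  rw [c1] at hta
  linarith [htest_split, hta, htb, k1, k2, hBbRtr, c2, hp1, hp2]

end
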